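/- For m = 2k+1 independent voters each correct with probability p > 1/2, the probability of a correct majority decision is strictly greater than p for all k ≥ 1. -/
import Mathlib


/-- Probability that a strict majority of `2k+1` independent voters, each correct
with probability `p`, is correct. -/
noncomputable def majProb (p : ℝ) (k : ℕ) : ℝ :=
  ∑ i ∈ Finset.Icc (k + 1) (2 * k + 1),
    ((2 * k + 1).choose i : ℝ) * p ^ i * (1 - p) ^ (2 * k + 1 - i)

private lemma reindex2 (f : ℕ → ℝ) (a b : ℕ) :
    ∑ i ∈ Finset.Icc (a + 2) (b + 2), f i = ∑ j ∈ Finset.Icc a b, f (j + 2) := by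
  rw [← Finset.map_add_right_Icc a b 2, Finset.sum_map]
  rfl

private lemma reindex1 (f : ℕ → ℝ) (a b : ℕ) :
    ∑ i ∈ Finset.Icc (a + 1) (b + 1), f i = ∑ j ∈ Finset.Icc a b, f (j + 1) := by
  rw [← Finset.map_add_right_Icc a b 1, Finset.sum_map]
  rfl

private lemma pascal2 (n i : ℕ) :
    ((n + 2).choose (i + 2) : ℝ) = n.choose i + 2 * n.choose (i + 1) + n.choose (i + 2) := by
  rw [Nat.choose_succ_succ (n+1) (i+1), Nat.choose_succ_succ n i, Nat.choose_succ_succ n (i+1)]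
  push_cast
  ring

private lemma maj_rec (p : ℝ) (k : ℕ) :
    majProb p (k + 1) = majProb p k
      + ((2 * k + 1).choose k : ℝ) * p ^ (k + 1) * (1 - p) ^ (k + 1) * (2 * p - 1) := by
  have h1 : majProb p (k + 1)
      = ∑ j ∈ Finset.Icc k (2 * k + 1),
          ((2 * k + 3).choose (j + 2) : ℝ) * p ^ (j + 2) * (1 - p) ^ (2 * k + 1 - j) := by
    rw [majProb, show k + 1 + 1 = k + 2 from rfl, show 2 * (k + 1) + 1 = (2 * k + 1) + 2 from by ring,
      show k + 2 = k + (2:ℕ) from rfl, reindex2]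
    refine Finset.sum_congr rfl fun j hj => ?_
    have hj' := Finset.mem_Icc.mp hj
    congr 2
    omega
  -- split via Pascal
  have h2 : majProb p (k + 1)
      = (∑ j ∈ Finset.Icc k (2 * k + 1), ((2 * k + 1).choose j : ℝ) * p ^ (j + 2) * (1 - p) ^ (2 * k + 1 - j))
      + (∑ j ∈ Finset.Icc k (2 * k + 1), 2 * ((2 * k + 1).choose (j + 1) : ℝ) * p ^ (j + 2) * (1 - p) ^ (2 * k + 1 - j))
      + (∑ j ∈ Finset.Icc k (2 * k + 1), ((2 * k + 1).choose (j + 2) : ℝ) * p ^ (j + 2) * (1 - p) ^ (2 * k + 1 - j)) := by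
    rw [h1, ← Finset.sum_add_distrib, ← Finset.sum_add_distrib]
    refine Finset.sum_congr rfl fun j hj => ?_
    rw [show (2 * k + 3) = (2 * k + 1) + 2 from by ring, pascal2]
    ring
  -- Sum A = p^2 * S(k)
  set S : ℕ → ℝ := fun a => ∑ i ∈ Finset.Icc a (2 * k + 1),
      ((2 * k + 1).choose i : ℝ) * p ^ i * (1 - p) ^ (2 * k + 1 - i) with hS
  have hA : (∑ j ∈ Finset.Icc k (2 * k + 1), ((2 * k + 1).choose j : ℝ) * p ^ (j + 2) * (1 - p) ^ (2 * k + 1 - j))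
      = p ^ 2 * S k := by
    rw [hS, Finset.mul_sum]
    refine Finset.sum_congr rfl fun j hj => ?_
    ring
  -- Sum B = 2 p q S(k+1)
  have hB : (∑ j ∈ Finset.Icc k (2 * k + 1), 2 * ((2 * k + 1).choose (j + 1) : ℝ) * p ^ (j + 2) * (1 - p) ^ (2 * k + 1 - j))
      = 2 * p * (1 - p) * S (k + 1) := by
    have : ∑ i ∈ Finset.Icc (k + 1) (2 * k + 1 + 1),
        2 * ((2 * k + 1).choose i : ℝ) * p ^ (i + 1) * (1 - p) ^ (2 * k + 2 - i)
        = ∑ j ∈ Finset.Icc k (2 * k + 1),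
        2 * ((2 * k + 1).choose (j + 1) : ℝ) * p ^ (j + 2) * (1 - p) ^ (2 * k + 1 - j) := by
      rw [reindex1]
      refine Finset.sum_congr rfl fun j hj => ?_
      have hj' := Finset.mem_Icc.mp hj
      congr 2
      omega
    rw [← this, Finset.sum_Icc_succ_top (by omega)]
    rw [show (2 * k + 1).choose (2 * k + 1 + 1) = 0 from Nat.choose_eq_zero_of_lt (by omega)]
    rw [hS, Finset.mul_sum]
    simp only [Nat.cast_zero]
    rw [mul_zero, zero_mul, zero_mul, add_zero]
    refine Finset.sum_congr rfl fun i hi => ?_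
    have hi' := Finset.mem_Icc.mp hi
    rw [show 2 * k + 2 - i = (2 * k + 1 - i) + 1 from by omega]
    ring
  -- Sum C = q^2 S(k+2)
  have hC : (∑ j ∈ Finset.Icc k (2 * k + 1), ((2 * k + 1).choose (j + 2) : ℝ) * p ^ (j + 2) * (1 - p) ^ (2 * k + 1 - j))
      = (1 - p) ^ 2 * S (k + 2) := by
    have : ∑ i ∈ Finset.Icc (k + 2) (2 * k + 1 + 2),
        ((2 * k + 1).choose i : ℝ) * p ^ i * (1 - p) ^ (2 * k + 3 - i)
        = ∑ j ∈ Finset.Icc k (2 * k + 1),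
        ((2 * k + 1).choose (j + 2) : ℝ) * p ^ (j + 2) * (1 - p) ^ (2 * k + 1 - j) := by
      rw [reindex2]
      refine Finset.sum_congr rfl fun j hj => ?_
      have hj' := Finset.mem_Icc.mp hj
      congr 2
      omega
    rw [← this, show 2 * k + 1 + 2 = (2 * k + 2) + 1 from rfl, Finset.sum_Icc_succ_top (by omega),
      show (2:ℕ) * k + 2 = (2 * k + 1) + 1 from rfl, Finset.sum_Icc_succ_top (by omega)]
    rw [show (2 * k + 1).choose (2 * k + 1 + 1) = 0 from Nat.choose_eq_zero_of_lt (by omega),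
      show (2 * k + 1).choose (2 * k + 1 + 1 + 1) = 0 from Nat.choose_eq_zero_of_lt (by omega)]
    rw [hS, Finset.mul_sum]
    simp only [Nat.cast_zero]
    rw [zero_mul, zero_mul, zero_mul, zero_mul, add_zero, add_zero]
    refine Finset.sum_congr rfl fun i hi => ?_
    have hi' := Finset.mem_Icc.mp hi
    rw [show 2 * k + 3 - i = (2 * k + 1 - i) + 2 from by omega]
    ring
  -- peel: S k = S (k+1) + bottom term a
  have hSk : S k = ((2 * k + 1).choose k : ℝ) * p ^ k * (1 - p) ^ (k + 1) + S (k + 1) := by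
    simp only [hS]
    rw [show Finset.Icc k (2 * k + 1) = insert k (Finset.Icc (k + 1) (2 * k + 1)) from by
      ext x; simp [Finset.mem_Icc, Finset.mem_insert]; omega]
    rw [Finset.sum_insert (by simp), show 2 * k + 1 - k = k + 1 from by omega]
  have hSk1 : S (k + 1) = ((2 * k + 1).choose (k + 1) : ℝ) * p ^ (k + 1) * (1 - p) ^ k + S (k + 2) := by
    simp only [hS]
    rw [show Finset.Icc (k + 1) (2 * k + 1) = insert (k + 1) (Finset.Icc (k + 2) (2 * k + 1)) from by
      ext x; simp [Finset.mem_Icc, Finset.mem_insert]; omega]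
    rw [Finset.sum_insert (by simp), show 2 * k + 1 - (k + 1) = k from by omega]
  have hsymm : ((2 * k + 1).choose (k + 1) : ℝ) = ((2 * k + 1).choose k : ℝ) := by
    rw [show k + 1 = (2 * k + 1) - k from by omega, Nat.choose_symm (by omega)]
  have hmaj : majProb p k = S (k + 1) := by rw [majProb, hS]
  rw [h2, hA, hB, hC, hmaj]
  have hc2 : S (k + 2) = S (k + 1) - ((2 * k + 1).choose k : ℝ) * p ^ (k + 1) * (1 - p) ^ k := by
    rw [hSk1, hsymm]; ring
  rw [hSk, hc2]
  ring

theorem stmt_9 (p : ℝ) (hp : 1 / 2 < p) (hp1 : p < 1) (k : ℕ) (hk : 1 ≤ k) :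
    majProb p k > p := by
  induction k, hk using Nat.le_induction with
  | base =>
    have hbase : majProb p 1 = 3 * p ^ 2 * (1 - p) + p ^ 3 := by
      rw [majProb]
      rw [show Finset.Icc (1 + 1) (2 * 1 + 1) = {2, 3} from rfl]
      rw [Finset.sum_pair (by norm_num)]
      norm_num
    rw [hbase]
    nlinarith [mul_pos (mul_pos (show (0:ℝ) < p by linarith) (show (0:ℝ) < 2 * p - 1 by linarith)) (show (0:ℝ) < 1 - p by linarith)]
  | succ n hn ih =>
    rw [maj_rec]
    have hpos : ((2 * n + 1).choose n : ℝ) * p ^ (n + 1) * (1 - p) ^ (n + 1) * (2 * p - 1) > 0 := by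
      have hp0 : (0:ℝ) < p := by linarith
      have hq0 : (0:ℝ) < 1 - p := by linarith
      exact mul_pos (mul_pos (mul_pos (by exact_mod_cast Nat.choose_pos (by omega)) (pow_pos hp0 _)) (pow_pos hq0 _)) (by linarith)
    linarith
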